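/- On ℝ⁶ with coordinates (q₀,q₁,q₂,q₃,p⁰,p¹), presymplectic form Ω = dq₀∧dp⁰ + dq₁∧dp¹, and Hamiltonian H = q₁p⁰ + q₂p¹ - ½μq₂² - ρq₀ (μ ≠ 0), the kernel of the map X ↦ i(X)Ω - dH restricted to vector fields tangent to the submanifold W₀ = {p⁰ = -μq₃, p¹ = μq₂} contains exactly one vector field, namely X_{LH} = q₁∂/∂q₀ + q₂∂/∂q₁ + q₃∂/∂q₂ - (ρ/μ)∂/∂q₃ + ρ∂/∂p⁰ - p⁰∂/∂p¹. -/

import Mathlib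

noncomputable section

/-! The Skinner–Rusk space `W = ℝ⁶` of the homogeneous deformed elastic beam, with
coordinates `(q₀, q₁, q₂, q₃, p⁰, p¹)` indexed by `0, ..., 5`. -/

/-- The presymplectic form `Ω = dq₀ ∧ dp⁰ + dq₁ ∧ dp¹` on `ℝ⁶`. -/
def beamOmega : (Fin 6 → ℝ) → (Fin 6 → ℝ) → (Fin 6 → ℝ) → ℝ :=
  fun _ u v => u 0 * v 4 - u 4 * v 0 + u 1 * v 5 - u 5 * v 1

/-- The Hamiltonian `H = q₁p⁰ + q₂p¹ - ½μq₂² - ρq₀`. -/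
def beamH (μ ρ : ℝ) : (Fin 6 → ℝ) → ℝ :=
  fun x => x 1 * x 4 + x 2 * x 5 - (1 / 2) * μ * (x 2) ^ 2 - ρ * x 0

/-- The vector field
`X_LH = q₁∂q₀ + q₂∂q₁ + q₃∂q₂ - (ρ/μ)∂q₃ + ρ∂p⁰ - p⁰∂p¹`. -/
def beamXLH (μ ρ : ℝ) : (Fin 6 → ℝ) → (Fin 6 → ℝ) :=
  fun x => ![x 1, x 2, x 3, -(ρ / μ), ρ, -(x 4)]

/-- The submanifold `W₀ = {p⁰ = -μq₃, p¹ = μq₂}`, the graph of the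
Legendre–Ostrogradsky map. -/
def beamW0 (μ : ℝ) : Set (Fin 6 → ℝ) :=
  {x | x 4 = -(μ * x 3) ∧ x 5 = μ * x 2}

/-! Pairing `i(X)Ω = dH` with the coordinate vectors `∂p⁰, ∂p¹, ∂q₀, ∂q₁` determines the
`q₀, q₁, p⁰, p¹` components of `X`, and pairing it with `∂q₂` forces the constraint
`p¹ = μq₂`, which holds on `W₀`. Since `Ω` does not see the `q₂, q₃` components, these are
determined only by tangency to `W₀`; solving for the `q₃` component is where `μ ≠ 0` enters. -/

theorem fderiv_beamH_apply (μ ρ : ℝ) (x v : Fin 6 → ℝ) :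
    fderiv ℝ (beamH μ ρ) x v =
      x 4 * v 1 + x 1 * v 4 + x 5 * v 2 + x 2 * v 5 - μ * x 2 * v 2 - ρ * v 0 := by
  have hcoord (i : Fin 6) := hasFDerivAt_apply (𝕜 := ℝ) i x
  have hH : HasFDerivAt (beamH μ ρ) _ x :=
    ((((hcoord 1).mul (hcoord 4)).add ((hcoord 2).mul (hcoord 5))).sub
      (((hcoord 2).pow 2).const_mul ((1 / 2) * μ))).sub ((hcoord 0).const_mul ρ)
  rw [hH.fderiv]
  simp only [one_div, Nat.add_one_sub_one, pow_one, nsmul_eq_mul, Nat.cast_ofNat, sub_apply,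
    add_apply, smul_apply, ContinuousLinearMap.proj_apply, smul_eq_mul]
  ring

theorem forall_beamOmega_eq_fderiv_beamH_iff {μ ρ : ℝ} {x u : Fin 6 → ℝ} :
    (∀ v, beamOmega x u v = fderiv ℝ (beamH μ ρ) x v) ↔
      u 0 = x 1 ∧ u 1 = x 2 ∧ u 4 = ρ ∧ u 5 = -x 4 ∧ x 5 = μ * x 2 := by
  simp only [beamOmega, fderiv_beamH_apply]
  constructor
  · intro h
    have h0 : u 0 = x 1 := by simpa using h (Pi.single 4 1)
    have h1 : u 1 = x 2 := by simpa using h (Pi.single 5 1)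
    have h4 : u 4 = ρ := by simpa using h (Pi.single 0 1)
    have h5 : u 5 = -x 4 := by simpa [neg_eq_iff_eq_neg] using h (Pi.single 1 1)
    have hx : μ * x 2 = x 5 := by simpa [eq_sub_iff_add_eq] using h (Pi.single 2 1)
    exact ⟨h0, h1, h4, h5, hx.symm⟩
  · rintro ⟨h0, h1, h4, h5, hx⟩ v
    rw [h0, h1, h4, h5, hx]
    ring

theorem dynamical_and_tangent_iff_eq_beamXLH {μ ρ : ℝ} (hμ : μ ≠ 0) {x : Fin 6 → ℝ}
    (hx : x ∈ beamW0 μ) (u : Fin 6 → ℝ) :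
    ((∀ v, beamOmega x u v = fderiv ℝ (beamH μ ρ) x v) ∧
        u 4 + μ * u 3 = 0 ∧ u 5 - μ * u 2 = 0) ↔ u = beamXLH μ ρ x := by
  obtain ⟨hp₀, hp₁⟩ := hx
  rw [forall_beamOmega_eq_fderiv_beamH_iff]
  constructor
  · rintro ⟨⟨h0, h1, h4, h5, -⟩, htan₀, htan₁⟩
    have h3 : u 3 = -(ρ / μ) := by
      field_simp
      linarith
    have h2 : u 2 = x 3 := mul_left_cancel₀ hμ (by linarith)
    ext i
    fin_cases i <;> simp [beamXLH, h0, h1, h2, h3, h4, h5]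
  · rintro rfl
    simp [beamXLH, hp₀, hp₁, mul_div_cancel₀ _ hμ]

/-- Among vector fields tangent to `W₀` satisfying `i(X)Ω = dH` on `W₀`, there is exactly
one, namely `X_LH`. -/
theorem beam_unique_dynamical_vector_field (μ ρ : ℝ) (hμ : μ ≠ 0) :
    ((∀ x ∈ beamW0 μ, ∀ v : Fin 6 → ℝ,
        beamOmega x (beamXLH μ ρ x) v = fderiv ℝ (beamH μ ρ) x v) ∧
      (∀ x ∈ beamW0 μ,
        (beamXLH μ ρ x) 4 + μ * (beamXLH μ ρ x) 3 = 0 ∧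
        (beamXLH μ ρ x) 5 - μ * (beamXLH μ ρ x) 2 = 0)) ∧
    ∀ X : (Fin 6 → ℝ) → (Fin 6 → ℝ),
      (∀ x ∈ beamW0 μ, ∀ v : Fin 6 → ℝ,
        beamOmega x (X x) v = fderiv ℝ (beamH μ ρ) x v) →
      (∀ x ∈ beamW0 μ, (X x) 4 + μ * (X x) 3 = 0 ∧ (X x) 5 - μ * (X x) 2 = 0) →
      ∀ x ∈ beamW0 μ, X x = beamXLH μ ρ x := by
  refine ⟨⟨fun x hx ↦ ?_, fun x hx ↦ ?_⟩, fun X hΩ htan x hx ↦ ?_⟩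
  · exact ((dynamical_and_tangent_iff_eq_beamXLH hμ hx _).2 rfl).1
  · exact ((dynamical_and_tangent_iff_eq_beamXLH hμ hx _).2 rfl).2
  · exact (dynamical_and_tangent_iff_eq_beamXLH hμ hx _).1 ⟨hΩ x hx, htan x hx⟩
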